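/- If T is a tree with at least 4 leaves that is not a star graph, then pd(T) < n₁(T), i.e., there exists a resolving partition of T with fewer than n₁(T) classes. -/

import Mathlib

open SimpleGraph

variable {V : Type*}

/-- Distance from a vertex to a set of vertices: `min_{u ∈ P} d(v,u)`. -/
noncomputable def distSet (G : SimpleGraph V) (v : V) (P : Set V) : ℕ :=
  sInf ((G.dist v) '' P)

/-- An ordered partition of `V` into `t` (nonempty) classes, encoded by a surjective
map `c : V → Fin t`, is resolving if distinct vertices have distinct partition
representations, i.e. distinct vectors of distances to the classes. -/
def IsResolvingPartition (G : SimpleGraph V) {t : ℕ} (c : V → Fin t) : Prop :=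
  Function.Surjective c ∧
    ∀ u v : V, (∀ i : Fin t, distSet G u {x | c x = i} = distSet G v {x | c x = i}) → u = v

/-- The partition dimension: the least `t` admitting a resolving partition into `t` classes. -/
noncomputable def partitionDim (G : SimpleGraph V) : ℕ :=
  sInf {t : ℕ | ∃ c : V → Fin t, IsResolvingPartition G c}

/-- A set `S` is a resolving set if distinct vertices have distinct vectors of
distances to the elements of `S`. -/
def IsResolvingSet (G : SimpleGraph V) (S : Set V) : Prop :=
  ∀ u v : V, (∀ w ∈ S, G.dist u w = G.dist v w) → u = v

/-- The metric dimension: the least cardinality of a resolving set. -/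
noncomputable def metricDim (G : SimpleGraph V) : ℕ :=
  sInf {k : ℕ | ∃ S : Set V, S.ncard = k ∧ IsResolvingSet G S}

/-- A leaf is a vertex of degree one. -/
def IsLeaf (G : SimpleGraph V) (v : V) : Prop := (G.neighborSet v).ncard = 1

/-- A major vertex is a vertex of degree at least three. -/
def IsMajor (G : SimpleGraph V) (v : V) : Prop := 3 ≤ (G.neighborSet v).ncard

/-- A path graph: a tree in which every vertex has degree at most two. -/
def IsPathGraph (G : SimpleGraph V) : Prop :=
  G.IsTree ∧ ∀ v : V, (G.neighborSet v).ncard ≤ 2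

/-- `u` is a terminal vertex of the major vertex `v` if `u` is a leaf and
`d(u,v) < d(u,w)` for every other major vertex `w`. -/
def IsTerminalOf (G : SimpleGraph V) (u v : V) : Prop :=
  IsLeaf G u ∧ IsMajor G v ∧ ∀ w : V, IsMajor G w → w ≠ v → G.dist u v < G.dist u w

/-- The terminal degree of a vertex: its number of terminal vertices. -/
noncomputable def terminalDegree (G : SimpleGraph V) (v : V) : ℕ :=
  {u | IsTerminalOf G u v}.ncard

/-- An exterior major vertex: a major vertex with positive terminal degree. -/
def IsExteriorMajor (G : SimpleGraph V) (v : V) : Prop :=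
  IsMajor G v ∧ 0 < terminalDegree G v

/-- `n₁(G)`: the number of leaves. -/
noncomputable def numLeaves (G : SimpleGraph V) : ℕ := {v | IsLeaf G v}.ncard

/-- `ex(G)`: the number of exterior major vertices. -/
noncomputable def numExteriorMajor (G : SimpleGraph V) : ℕ := {v | IsExteriorMajor G v}.ncard

/-- A support vertex: a vertex adjacent to a leaf. -/
def IsSupport (G : SimpleGraph V) (v : V) : Prop := ∃ u, G.Adj v u ∧ IsLeaf G u

/-- `ξ(G)`: the number of support vertices. -/
noncomputable def numSupport (G : SimpleGraph V) : ℕ := {v | IsSupport G v}.ncard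

/-- `θ(G)`: the maximum number of leaves adjacent to a single support vertex. -/
noncomputable def maxLeavesAtSupport (G : SimpleGraph V) : ℕ :=
  sSup {n : ℕ | ∃ v, IsSupport G v ∧ n = {u | G.Adj v u ∧ IsLeaf G u}.ncard}

/-- A star graph: one center vertex adjacent to all other vertices, each of which is a leaf. -/
def IsStar (G : SimpleGraph V) : Prop :=
  ∃ c : V, (∀ v : V, v ≠ c → G.Adj c v) ∧ ∀ v : V, v ≠ c → IsLeaf G v

/-!
If `T` has two distinct major vertices `u` and `w`, take a leaf `y` beyond `w` as seen from `u` and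
a leaf `x` beyond `u` as seen from `y`, so that `u` and `w` lie on the geodesic from `x` to `y`. The
leaves other than `x` and `y` then resolve `T`: two vertices with the same distances to all of them
both lie on that geodesic, and every major vertex `m` of the geodesic has a leaf behind it, so `m` is
equidistant from the two vertices, i.e. it is their midpoint; this forces `u = w`. These `n₁ - 2`
leaves as singletons, together with one class for the remaining vertices, give `n₁ - 1` classes.

Otherwise `T` is a spider: legs, each ending in a leaf, joined at a centre `c`. As `T` is not a
star, some leg, ending in `s`, has length at least two; pick two further leaves `a` and `b`. The
classes are the legs of the leaves other than `s`, where `c` and the first vertex of the leg of `s`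
join the class of `a`, and the rest of the leg of `s` joins the class of `b`. The distance to the
leg of a fourth leaf gives the depth of a vertex, and vertices of one class at the same depth but
on different legs are told apart by their distances to the classes of `a` and `b`.
-/

variable {G : SimpleGraph V} {a b c d e l m n p q r s t u v w x y z : V}

theorem isMajor_of_adj [Finite V] (ha : G.Adj m a) (hb : G.Adj m b) (hc : G.Adj m c)
    (hab : a ≠ b) (hac : a ≠ c) (hbc : b ≠ c) : IsMajor G m :=
  (Set.two_lt_ncard_iff (Set.toFinite _)).2 ⟨a, b, c, ha, hb, hc, hab, hac, hbc⟩

theorem IsMajor.not_isLeaf (h : IsMajor G m) : ¬ IsLeaf G m := by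
  unfold IsMajor IsLeaf at *
  omega

namespace SimpleGraph

def Between (G : SimpleGraph V) (a b c : V) : Prop := G.dist a b + G.dist b c = G.dist a c

theorem between_self_left (a b : V) : G.Between a a b := by simp [Between]

theorem between_self_right (a b : V) : G.Between a b b := by simp [Between]

namespace Between

theorem symm (h : G.Between a b c) : G.Between c b a := by
  have := G.dist_comm (u := a) (v := b)
  have := G.dist_comm (u := b) (v := c)
  have := G.dist_comm (u := a) (v := c)
  unfold Between at *
  omega

theorem dist_add_one (h : G.Between a b c) (hbc : G.Adj b c) : G.dist a b + 1 = G.dist a c := by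
  rwa [Between, dist_eq_one_iff_adj.2 hbc] at h

theorem trans_left (hG : G.Connected) (h₁ : G.Between a c d) (h₂ : G.Between a b c) :
    G.Between a b d := by
  have := hG.dist_triangle (u := a) (v := b) (w := d)
  have := hG.dist_triangle (u := b) (v := c) (w := d)
  unfold Between at *
  omega

theorem trans_right (hG : G.Connected) (h₁ : G.Between a b d) (h₂ : G.Between b c d) :
    G.Between a c d := by
  have := hG.dist_triangle (u := a) (v := b) (w := c)
  have := hG.dist_triangle (u := a) (v := c) (w := d)
  unfold Between at *
  omega

theorem trans_left_right (hG : G.Connected) (h₁ : G.Between a c d) (h₂ : G.Between a b c) :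
    G.Between b c d := by
  have := hG.dist_triangle (u := a) (v := b) (w := d)
  have := hG.dist_triangle (u := b) (v := c) (w := d)
  unfold Between at *
  omega

theorem trans_right_left (hG : G.Connected) (h₁ : G.Between a b d) (h₂ : G.Between b c d) :
    G.Between a b c := by
  have := hG.dist_triangle (u := a) (v := b) (w := c)
  have := hG.dist_triangle (u := a) (v := c) (w := d)
  unfold Between at *
  omega

end Between

theorem Connected.exists_adj_between (hG : G.Connected) (h : a ≠ b) :
    ∃ n, G.Adj n b ∧ G.Between a n b := by
  obtain ⟨p, hp⟩ := hG.exists_walk_length_eq_dist b a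
  cases p with
  | nil => exact absurd rfl h
  | @cons _ n _ hadj q =>
    refine ⟨n, hadj.symm, ?_⟩
    have := dist_le q
    have := hG.dist_triangle (u := b) (v := n) (w := a)
    have := G.dist_comm (u := a) (v := n)
    have := G.dist_comm (u := a) (v := b)
    rw [Walk.length_cons] at hp
    rw [Between, dist_eq_one_iff_adj.2 hadj.symm]
    rw [dist_eq_one_iff_adj.2 hadj] at *
    omega

theorem Connected.exists_between_dist_eq (hG : G.Connected) {j : ℕ} (h : j ≤ G.dist a b) :
    ∃ z, G.Between a z b ∧ G.dist a z = j := by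
  induction hk : G.dist a b - j generalizing j with
  | zero => exact ⟨b, between_self_right a b, by omega⟩
  | succ k ih =>
    obtain ⟨z, hz, hzd⟩ := ih (j := j + 1) (by omega) (by omega)
    obtain ⟨n, hnz, hanz⟩ := hG.exists_adj_between (a := a) (b := z)
      (by rintro rfl; simp at hzd)
    exact ⟨n, hz.trans_left hG hanz, by have := hanz.dist_add_one hnz; omega⟩

theorem Connected.not_isLeaf_of_between [Finite V] (hG : G.Connected) (h : G.Between a m b)
    (ha : m ≠ a) (hb : m ≠ b) : ¬ IsLeaf G m := by
  obtain ⟨n₁, h₁, hb₁⟩ := hG.exists_adj_between ha.symm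
  obtain ⟨n₂, h₂, hb₂⟩ := hG.exists_adj_between hb.symm
  have hne : n₁ ≠ n₂ := by
    rintro rfl
    have := hG.dist_triangle (u := a) (v := n₁) (w := b)
    have := hb₁.dist_add_one h₁
    have := hb₂.dist_add_one h₂
    have := G.dist_comm (u := m) (v := b)
    have := G.dist_comm (u := n₁) (v := b)
    unfold Between at h
    omega
  unfold IsLeaf
  have : 1 < (G.neighborSet m).ncard :=
    (Set.one_lt_ncard_iff (Set.toFinite _)).2 ⟨n₁, n₂, h₁.symm, h₂.symm, hne⟩
  omega

namespace IsTree

theorem length_eq_dist (hT : G.IsTree) {p : G.Walk a b} (hp : p.IsPath) :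
    p.length = G.dist a b := by
  obtain ⟨q, hq, hql⟩ := hT.connected.exists_path_of_dist a b
  rw [(hT.existsUnique_path a b).unique hp hq, hql]

theorem mem_support_of_between (hT : G.IsTree) {p : G.Walk a c} (hp : p.IsPath)
    (h : G.Between a b c) : b ∈ p.support := by
  obtain ⟨q₁, -, hq₁⟩ := hT.connected.exists_path_of_dist a b
  obtain ⟨q₂, -, hq₂⟩ := hT.connected.exists_path_of_dist b c
  have hq : (q₁.append q₂).IsPath :=
    Walk.isPath_of_length_eq_dist _ (by rw [Walk.length_append, hq₁, hq₂]; exact h)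
  rw [(hT.existsUnique_path a c).unique hp hq]
  exact Walk.mem_support_append_iff q₁ q₂ |>.2 (Or.inl q₁.end_mem_support)

theorem eq_of_between_of_dist_eq (hT : G.IsTree) (hx : G.Between a x b) (hy : G.Between a y b)
    (hd : G.dist a x = G.dist a y) : x = y := by
  classical
  obtain ⟨p, hp, -⟩ := hT.connected.exists_path_of_dist a b
  have key : ∀ z, G.Between a z b → p.getVert (G.dist a z) = z := fun z hz => by
    have hz := hT.mem_support_of_between hp hz
    rw [← hT.length_eq_dist (hp.takeUntil hz), p.getVert_length_takeUntil hz]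
  rw [← key x hx, ← key y hy, hd]

theorem eq_of_adj_of_between (hT : G.IsTree) (hx : G.Adj x l) (hy : G.Adj y l)
    (hbx : G.Between r x l) (hby : G.Between r y l) : x = y :=
  hT.eq_of_between_of_dist_eq hbx hby (by
    have := hbx.dist_add_one hx
    have := hby.dist_add_one hy
    omega)

theorem between_or_between_of_adj (hT : G.IsTree) (r : V) (h : G.Adj x y) :
    G.Between r x y ∨ G.Between r y x := by
  rcases hT.dist_eq_dist_add_one_of_adj r h with h' | h'
  · right; rw [Between, dist_eq_one_iff_adj.2 h.symm]; omega
  · left; rw [Between, dist_eq_one_iff_adj.2 h]; omega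

theorem between_of_adj_of_ne (hT : G.IsTree) (hn : G.Adj n l) (hz : G.Adj l z) (hzn : z ≠ n)
    (hb : G.Between r n l) : G.Between r l z :=
  (hT.between_or_between_of_adj r hz).resolve_right
    fun h => hzn (hT.eq_of_adj_of_between hz.symm hn h hb)

theorem between_of_between_of_between (hT : G.IsTree) (h₁ : G.Between a b c)
    (h₂ : G.Between b c d) (hbc : b ≠ c) : G.Between a c d := by
  induction hn : G.dist c d using Nat.strong_induction_on generalizing d with
  | _ n ih =>
  obtain rfl | hcd := eq_or_ne c d
  · exact between_self_right a c
  obtain ⟨e, hed, hced⟩ := hT.connected.exists_adj_between hcd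
  have hbce : G.Between b c e := h₂.trans_right_left hT.connected hced
  have hace : G.Between a c e :=
    ih _ (by have := hced.dist_add_one hed; omega) hbce rfl
  -- the neighbour of `e` towards `a` is not `d`, so `d` lies beyond `e` as seen from `a`
  obtain ⟨f, hfe, hafe, hfd⟩ : ∃ f, G.Adj f e ∧ G.Between a f e ∧ f ≠ d := by
    obtain rfl | hec := eq_or_ne e c
    · obtain ⟨f, hfe, hbfe⟩ := hT.connected.exists_adj_between hbc
      refine ⟨f, hfe, h₁.trans_right hT.connected hbfe, ?_⟩
      rintro rfl
      have := hbfe.dist_add_one hfe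
      have := h₂.dist_add_one hed
      omega
    · obtain ⟨f, hfe, hcfe⟩ := hT.connected.exists_adj_between hec.symm
      refine ⟨f, hfe, hace.trans_right hT.connected hcfe, ?_⟩
      rintro rfl
      have := hcfe.dist_add_one hfe
      have := hced.dist_add_one hed
      omega
  exact (hT.between_of_adj_of_ne hfe hed hfd.symm hafe).trans_left hT.connected hace

theorem between_of_between_of_dist_le (hT : G.IsTree) (hp : G.Between x p y)
    (hm : G.Between x m y) (hle : G.dist x p ≤ G.dist x m) : G.Between x p m := by
  obtain ⟨z, hz, hzd⟩ := hT.connected.exists_between_dist_eq hle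
  rwa [← hT.eq_of_between_of_dist_eq (hm.trans_left hT.connected hz) hp hzd]

theorem exists_isLeaf_between [Finite V] (hT : G.IsTree) (h : p ≠ q) :
    ∃ l, IsLeaf G l ∧ G.Between p q l := by
  obtain ⟨l, hql : G.Between p q l, hmax⟩ := Set.exists_max_image {z | G.Between p q z}
    (G.dist p) (Set.toFinite _) ⟨q, between_self_right p q⟩
  refine ⟨l, ?_, hql⟩
  have hpl : p ≠ l := by
    rintro rfl
    have := hT.connected.pos_dist_of_ne h
    rw [Between, dist_self] at hql
    omega
  obtain ⟨n, hnl, hpnl⟩ := hT.connected.exists_adj_between hpl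
  by_contra hleaf
  obtain ⟨z, hz, hzn⟩ : ∃ z, G.Adj l z ∧ z ≠ n := by
    by_contra! h
    apply hleaf
    rw [IsLeaf, (Set.eq_singleton_iff_unique_mem (s := G.neighborSet l)).2 ⟨hnl.symm, h⟩,
      Set.ncard_singleton]
  have hplz := hT.between_of_adj_of_ne hnl hz hzn hpnl
  have := hmax z (hplz.trans_left hT.connected hql)
  have := hplz.dist_add_one hz
  omega

theorem exists_isMajor [Fintype V] (hT : G.IsTree) (h : 3 ≤ numLeaves G) :
    ∃ v, IsMajor G v := by
  classical
  have hdeg : ∀ v, (G.neighborSet v).ncard = G.degree v := fun v => by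
    rw [← Nat.card_coe_set_eq, Nat.card_eq_fintype_card, card_neighborSet_eq_degree]
  by_contra! hmaj
  have hle : ∀ v, G.degree v ≤ 2 := fun v => by
    have := hmaj v
    rw [IsMajor, hdeg] at this
    omega
  have hsum : ∑ v, (2 - G.degree v) + ∑ v, G.degree v = ∑ _v : V, 2 := by
    rw [← Finset.sum_add_distrib]
    exact Finset.sum_congr rfl fun v _ => Nat.sub_add_cancel (hle v)
  rw [G.sum_degrees_eq_twice_card_edges, Finset.sum_const, Finset.card_univ, smul_eq_mul,
    ← hT.card_edgeFinset] at hsum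
  have hleaves : numLeaves G = (Finset.univ.filter fun v => G.degree v = 1).card := by
    rw [numLeaves, ← Set.ncard_coe_finset]
    congr 1
    ext v
    simp [IsLeaf, hdeg]
  -- each leaf contributes `1` to `∑ v, (2 - deg v) = 2`
  have : numLeaves G ≤ ∑ v, (2 - G.degree v) := calc
    numLeaves G = ∑ v ∈ Finset.univ.filter fun v => G.degree v = 1, 1 := by
      rw [hleaves, Finset.card_eq_sum_ones]
    _ ≤ ∑ v ∈ Finset.univ.filter fun v => G.degree v = 1, (2 - G.degree v) :=
      Finset.sum_le_sum fun v hv => by simp at hv; omega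
    _ ≤ ∑ v, (2 - G.degree v) := Finset.sum_le_sum_of_subset (Finset.subset_univ _)
  omega

theorem exists_isLeaf_one_lt_dist [Finite V] (hT : G.IsTree) (hs : ¬ IsStar G) (c : V) :
    ∃ l, IsLeaf G l ∧ 1 < G.dist c l := by
  by_contra! h
  have key : ∀ v, v ≠ c → G.Adj c v ∧ IsLeaf G v := fun v hv => by
    obtain ⟨l, hl, hcvl⟩ := hT.exists_isLeaf_between hv.symm
    have := h l hl
    have := hT.connected.pos_dist_of_ne hv.symm
    obtain rfl : v = l := hT.connected.dist_eq_zero_iff.1 (by unfold Between at hcvl; omega)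
    exact ⟨dist_eq_one_iff_adj.1 (by unfold Between at hcvl; omega), hl⟩
  exact hs ⟨c, fun v hv => (key v hv).1, fun v hv => (key v hv).2⟩

theorem exists_adj_between_between [Finite V] (hT : G.IsTree) (hm : IsMajor G m) (x y : V) :
    ∃ z, G.Adj m z ∧ G.Between x m z ∧ G.Between y m z := by
  have hle : ∀ r, {z | G.Adj z m ∧ G.Between r z m}.ncard ≤ 1 := fun r =>
    (Set.ncard_le_one_iff (Set.toFinite _)).2 fun h₁ h₂ =>
      hT.eq_of_adj_of_between h₁.1 h₂.1 h₁.2 h₂.2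
  by_contra! h
  have hsub : G.neighborSet m ⊆
      {z | G.Adj z m ∧ G.Between x z m} ∪ {z | G.Adj z m ∧ G.Between y z m} := fun z hz => by
    rcases hT.between_or_between_of_adj x hz with hx | hx
    · rcases hT.between_or_between_of_adj y hz with hy | hy
      · exact absurd hy (h z hz hx)
      · exact Or.inr ⟨hz.symm, hy⟩
    · exact Or.inl ⟨hz.symm, hx⟩
  have := (Set.ncard_le_ncard hsub (Set.toFinite _)).trans (Set.ncard_union_le _ _)
  have := hle x
  have := hle y
  unfold IsMajor at hm
  omega

theorem between_or_between_of_between (hT : G.IsTree) (hr : G.Between x r y)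
    (hs : G.Between x s y) : G.Between x r s ∨ G.Between x s r :=
  (le_total (G.dist x r) (G.dist x s)).imp (hT.between_of_between_of_dist_le hr hs)
    (hT.between_of_between_of_dist_le hs hr)

theorem exists_isLeaf_forall_between [Finite V] (hT : G.IsTree) (hm : IsMajor G m)
    (hxmy : G.Between x m y) :
    ∃ l, IsLeaf G l ∧ l ≠ x ∧ l ≠ y ∧ ∀ r, G.Between x r y → G.Between r m l := by
  obtain ⟨z, hz, hxmz, hymz⟩ := hT.exists_adj_between_between hm x y
  obtain ⟨l, hl, hmzl⟩ := hT.exists_isLeaf_between hz.ne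
  have hml : 0 < G.dist m l := hT.connected.pos_dist_of_ne fun h => hm.not_isLeaf (h ▸ hl)
  have hxml := (hT.between_of_between_of_between hxmz hmzl hz.ne).trans_left hT.connected hxmz
  have hyml := (hT.between_of_between_of_between hymz hmzl hz.ne).trans_left hT.connected hymz
  refine ⟨l, hl, ?_, ?_, fun r hr => ?_⟩
  · rintro rfl
    rw [Between, dist_self] at hxml
    omega
  · rintro rfl
    rw [Between, dist_self] at hyml
    omega
  rcases hT.between_or_between_of_between hr hxmy with h | h
  · exact hxml.trans_left_right hT.connected h
  · exact hyml.trans_left_right hT.connected (hr.trans_left_right hT.connected h).symm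

theorem two_mul_dist_eq_add (hT : G.IsTree) (hp : G.Between x p y) (hq : G.Between x q y)
    (hm : G.Between x m y) (hpq : p ≠ q) (hd : G.dist p m = G.dist q m) :
    2 * G.dist x m = G.dist x p + G.dist x q := by
  have := G.dist_comm (u := p) (v := m)
  have := G.dist_comm (u := q) (v := m)
  have : G.dist x p ≠ G.dist x q := fun h => hpq (hT.eq_of_between_of_dist_eq hp hq h)
  rcases hT.between_or_between_of_between hp hm with h₁ | h₁ <;>
    rcases hT.between_or_between_of_between hq hm with h₂ | h₂ <;>
    · unfold Between at h₁ h₂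
      omega

theorem between_of_forall_isLeaf_dist_eq [Finite V] (hT : G.IsTree) (hpq : p ≠ q)
    (h : ∀ l, IsLeaf G l → l ≠ x → l ≠ y → G.dist p l = G.dist q l) :
    G.Between x p y ∧ G.Between x q y := by
  have key : ∀ l, IsLeaf G l → G.dist p l ≠ G.dist q l → l = x ∨ l = y := by
    intro l hl hne
    by_contra! h'
    exact hne (h l hl h'.1 h'.2)
  have hdpq := hT.connected.pos_dist_of_ne hpq
  obtain ⟨a, ha, hpqa⟩ := hT.exists_isLeaf_between hpq
  have hpa : p ≠ a := by
    rintro rfl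
    rw [Between, dist_self] at hpqa
    omega
  obtain ⟨b, hb, hapb⟩ := hT.exists_isLeaf_between hpa.symm
  have hqpb : G.Between q p b := hapb.trans_left_right hT.connected hpqa.symm
  have haqb : G.Between a q b := hapb.trans_left hT.connected hpqa.symm
  have hab : a ≠ b := by
    rintro rfl
    have := hT.connected.pos_dist_of_ne hpa
    rw [Between, dist_self] at hapb
    omega
  have ha' := key a ha (by unfold Between at hpqa; omega)
  have hb' := key b hb (by
    have := G.dist_comm (u := p) (v := q)
    unfold Between at hqpb
    omega)
  rcases ha' with rfl | rfl <;> rcases hb' with rfl | rfl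
  · exact absurd rfl hab
  · exact ⟨hapb, haqb⟩
  · exact ⟨hapb.symm, haqb.symm⟩
  · exact absurd rfl hab

end IsTree
end SimpleGraph

section distSet

variable {P : Set V}

theorem distSet_le_dist (hs : s ∈ P) : distSet G v P ≤ G.dist v s :=
  Nat.sInf_le ⟨s, hs, rfl⟩

theorem le_distSet {k : ℕ} (hP : P.Nonempty) (h : ∀ s ∈ P, k ≤ G.dist v s) :
    k ≤ distSet G v P :=
  le_csInf (hP.image _) (by rintro _ ⟨s, hs, rfl⟩; exact h s hs)

theorem distSet_singleton : distSet G v {s} = G.dist v s := by simp [distSet]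

theorem SimpleGraph.Connected.distSet_eq_zero_iff (hG : G.Connected) (hP : P.Nonempty) :
    distSet G v P = 0 ↔ v ∈ P := by
  refine ⟨fun h => ?_, fun h => by simpa using distSet_le_dist (G := G) (v := v) h⟩
  obtain ⟨s, hs, hsd⟩ := Nat.sInf_mem (hP.image (G.dist v))
  unfold distSet at h
  rwa [hG.dist_eq_zero_iff.1 (hsd.trans h)]

end distSet

/-- `IsResolvingPartition` for a colouring with values in an arbitrary type, without
surjectivity. -/
def IsResolvingColouring {α : Type*} (G : SimpleGraph V) (κ : V → α) : Prop :=
  ∀ u v, (∀ i, distSet G u {x | κ x = i} = distSet G v {x | κ x = i}) → u = v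

theorem IsResolvingColouring.exists_isResolvingPartition [Finite V] {α : Type*} {κ : V → α}
    (h : IsResolvingColouring G κ) :
    ∃ c : V → Fin (Set.range κ).ncard, IsResolvingPartition G c := by
  let e : Set.range κ ≃ Fin (Set.range κ).ncard :=
    Finite.equivFinOfCardEq (Nat.card_coe_set_eq _)
  have hcls : ∀ i : Set.range κ, {x | e ⟨κ x, x, rfl⟩ = e i} = {x | κ x = i} := fun i => by
    ext x
    simp [e.apply_eq_iff_eq, Subtype.ext_iff]
  refine ⟨fun v => e ⟨κ v, v, rfl⟩, fun j => ?_, fun u v huv => h u v fun i => ?_⟩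
  · obtain ⟨⟨_, v, rfl⟩, rfl⟩ := e.surjective j
    exact ⟨v, rfl⟩
  · by_cases hi : i ∈ Set.range κ
    · simpa only [hcls ⟨i, hi⟩] using huv (e ⟨i, hi⟩)
    · have hempty : {x | κ x = i} = (∅ : Set V) :=
        Set.eq_empty_of_forall_notMem fun x hx => hi ⟨x, hx⟩
      simp [hempty, distSet]

theorem IsResolvingSet.exists_isResolvingPartition [Finite V] {S : Set V}
    (hS : IsResolvingSet G S) (hx : x ∉ S) :
    ∃ c : V → Fin (S.ncard + 1), IsResolvingPartition G c := by
  classical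
  let κ : V → V := fun v => if v ∈ S then v else x
  have hrange : Set.range κ = insert x S := by
    ext v
    constructor
    · rintro ⟨w, rfl⟩
      by_cases hw : w ∈ S <;> simp [κ, hw]
    · rintro (rfl | hv)
      · exact ⟨v, by simp [κ]⟩
      · exact ⟨v, by simp [κ, hv]⟩
  have hκ : IsResolvingColouring G κ := fun u v h => hS u v fun s hs => by
    have hcls : {y | κ y = s} = {s} := by
      ext y
      by_cases hy : y ∈ S
      · simp [κ, hy]
      · show (if y ∈ S then y else x) = s ↔ y = s
        rw [if_neg hy]
        exact iff_of_false (by rintro rfl; exact hx hs) (by rintro rfl; exact hy hs)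
    simpa [hcls, distSet_singleton] using h s
  rw [← Set.ncard_insert_of_notMem hx, ← hrange]
  exact hκ.exists_isResolvingPartition

namespace SimpleGraph.IsTree

theorem isResolvingSet_leaves_diff [Finite V] (hT : G.IsTree) (hu : IsMajor G u)
    (hw : IsMajor G w) (huw : u ≠ w) (hxuy : G.Between x u y) (hxwy : G.Between x w y) :
    IsResolvingSet G ({v | IsLeaf G v} \ {x, y}) := by
  intro p q hpq
  by_contra hne
  have hleaf : ∀ l, IsLeaf G l → l ≠ x → l ≠ y → G.dist p l = G.dist q l :=
    fun l hl hx hy => hpq l ⟨hl, by simp [hx, hy]⟩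
  obtain ⟨hxpy, hxqy⟩ := hT.between_of_forall_isLeaf_dist_eq hne hleaf
  have hmid : ∀ m, IsMajor G m → G.Between x m y →
      2 * G.dist x m = G.dist x p + G.dist x q := by
    intro m hm hxmy
    obtain ⟨l, hl, hlx, hly, hml⟩ := hT.exists_isLeaf_forall_between hm hxmy
    refine hT.two_mul_dist_eq_add hxpy hxqy hxmy hne ?_
    have := hleaf l hl hlx hly
    have := hml p hxpy
    have := hml q hxqy
    unfold Between at *
    omega
  exact huw (hT.eq_of_between_of_dist_eq hxuy hxwy (by
    have := hmid u hu hxuy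
    have := hmid w hw hxwy
    omega))

theorem exists_isResolvingPartition_of_isMajor_ne [Finite V] (hT : G.IsTree)
    (hu : IsMajor G u) (hw : IsMajor G w) (huw : u ≠ w) :
    ∃ c : V → Fin (numLeaves G - 1), IsResolvingPartition G c := by
  obtain ⟨y, hy, huwy⟩ := hT.exists_isLeaf_between huw
  have hyu : y ≠ u := fun h => hu.not_isLeaf (h ▸ hy)
  obtain ⟨x, hx, hyux⟩ := hT.exists_isLeaf_between hyu
  have hxy : x ≠ y := by
    rintro rfl
    have := hT.connected.pos_dist_of_ne hyu
    rw [Between, dist_self] at hyux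
    omega
  have hS := hT.isResolvingSet_leaves_diff hu hw huw hyux.symm
    (hyux.trans_left hT.connected huwy.symm).symm
  have hsub : ({x, y} : Set V) ⊆ {v | IsLeaf G v} :=
    Set.insert_subset hx (Set.singleton_subset_iff.2 hy)
  have hcard : ({v | IsLeaf G v} \ {x, y}).ncard + 1 = numLeaves G - 1 := by
    have := Set.ncard_le_ncard hsub
    rw [Set.ncard_sdiff hsub, Set.ncard_pair hxy]
    rw [Set.ncard_pair hxy] at this
    unfold numLeaves
    omega
  exact hcard ▸ hS.exists_isResolvingPartition fun h => hu.not_isLeaf h.1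

end SimpleGraph.IsTree

open Classical in
/-- In a spider with centre `c`, the leaf at the end of the leg through `v`. -/
noncomputable def legLeaf (G : SimpleGraph V) (c v : V) : V :=
  if h : ∃ l, IsLeaf G l ∧ G.Between c v l then h.choose else v

open Classical in
noncomputable def spiderColouring (G : SimpleGraph V) (c s a b v : V) : V :=
  if v = c ∨ legLeaf G c v = s ∧ G.dist c v = 1 then a
  else if legLeaf G c v = s then b else legLeaf G c v

theorem spiderColouring_self : spiderColouring G c s a b c = a := by
  simp [spiderColouring]

theorem spiderColouring_of_legLeaf_ne (hv : v ≠ c) (h : legLeaf G c v ≠ s) :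
    spiderColouring G c s a b v = legLeaf G c v := by
  simp [spiderColouring, hv, h]

theorem spiderColouring_of_legLeaf_eq (hv : v ≠ c) (h : legLeaf G c v = s) :
    spiderColouring G c s a b v = if G.dist c v = 1 then a else b := by
  simp only [spiderColouring, hv, h, false_or, true_and, if_true]

theorem legLeaf_eq_spiderColouring_or_eq (hv : v ≠ c) :
    legLeaf G c v = spiderColouring G c s a b v ∨ legLeaf G c v = s := by
  by_cases h : legLeaf G c v = s
  · exact Or.inr h
  · exact Or.inl (spiderColouring_of_legLeaf_ne hv h).symm

theorem spiderColouring_eq_or_eq_of_legLeaf_eq (hv : v ≠ c) (h : legLeaf G c v = s) :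
    spiderColouring G c s a b v = a ∨ spiderColouring G c s a b v = b := by
  rw [spiderColouring_of_legLeaf_eq hv h]
  split_ifs <;> simp

theorem legLeaf_eq_of_spiderColouring_eq (hea : e ≠ a) (heb : e ≠ b)
    (h : spiderColouring G c s a b t = e) : t ≠ c ∧ legLeaf G c t = e := by
  have htc : t ≠ c := by
    rintro rfl
    exact hea (h.symm.trans spiderColouring_self)
  refine ⟨htc, (legLeaf_eq_spiderColouring_or_eq htc).elim (·.trans h) fun hs => ?_⟩
  rcases spiderColouring_eq_or_eq_of_legLeaf_eq htc hs (a := a) (b := b) with h' | h'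
  exacts [absurd (h.symm.trans h') hea, absurd (h.symm.trans h') heb]

namespace SimpleGraph.IsTree

variable [Finite V]

theorem legLeaf_spec (hT : G.IsTree) (hv : v ≠ c) :
    IsLeaf G (legLeaf G c v) ∧ G.Between c v (legLeaf G c v) := by
  have h := hT.exists_isLeaf_between hv.symm
  rw [legLeaf, dif_pos h]
  exact h.choose_spec

theorem eq_of_isLeaf_of_between (hT : G.IsTree) (huniq : ∀ v, IsMajor G v → v = c)
    {l₁ l₂ : V} (hv : v ≠ c) (h₁ : IsLeaf G l₁) (h₂ : IsLeaf G l₂) (hb₁ : G.Between c v l₁)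
    (hb₂ : G.Between c v l₂) : l₁ = l₂ := by
  induction hn : G.dist v l₁ using Nat.strong_induction_on generalizing v with
  | _ n ih =>
  by_contra hne
  obtain rfl | hv₁ := eq_or_ne v l₁
  · exact hT.connected.not_isLeaf_of_between hb₂ hv hne h₁
  obtain rfl | hv₂ := eq_or_ne v l₂
  · exact hT.connected.not_isLeaf_of_between hb₁ hv (Ne.symm hne) h₂
  obtain ⟨n₀, hn₀, hcn₀⟩ := hT.connected.exists_adj_between hv.symm
  obtain ⟨z₁, hz₁, hlz₁⟩ := hT.connected.exists_adj_between hv₁.symm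
  obtain ⟨z₂, hz₂, hlz₂⟩ := hT.connected.exists_adj_between hv₂.symm
  have hcvz₁ := (hb₁.trans_right_left hT.connected hlz₁.symm).dist_add_one hz₁.symm
  have hcvz₂ := (hb₂.trans_right_left hT.connected hlz₂.symm).dist_add_one hz₂.symm
  have hcn₀v := hcn₀.dist_add_one hn₀
  -- `v ≠ c` has at most two neighbours, so the geodesics to `l₁` and `l₂` leave it together
  obtain rfl : z₁ = z₂ := by
    by_contra hz
    refine hv (huniq v (isMajor_of_adj hn₀.symm hz₁.symm hz₂.symm ?_ ?_ hz)) <;>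
      · rintro rfl
        omega
  have hz₁c : z₁ ≠ c := by
    rintro rfl
    simp at hcvz₁
  refine hne (ih _ ?_ hz₁c (hb₁.trans_right hT.connected hlz₁.symm)
    (hb₂.trans_right hT.connected hlz₂.symm) rfl)
  have := hlz₁.symm
  unfold Between at this
  rw [dist_eq_one_iff_adj.2 hz₁.symm] at this
  omega

theorem legLeaf_eq (hT : G.IsTree) (huniq : ∀ v, IsMajor G v → v = c) (hv : v ≠ c)
    (hl : IsLeaf G l) (h : G.Between c v l) : legLeaf G c v = l :=
  hT.eq_of_isLeaf_of_between huniq hv (hT.legLeaf_spec hv).1 hl (hT.legLeaf_spec hv).2 h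

theorem legLeaf_eq_legLeaf (hT : G.IsTree) (huniq : ∀ v, IsMajor G v → v = c) (hu : u ≠ c)
    (hv : v ≠ c) (h : G.Between c u v) : legLeaf G c u = legLeaf G c v :=
  hT.legLeaf_eq huniq hu (hT.legLeaf_spec hv).1 ((hT.legLeaf_spec hv).2.trans_left hT.connected h)

theorem between_of_legLeaf_ne (hT : G.IsTree) (huniq : ∀ v, IsMajor G v → v = c) (hu : u ≠ c)
    (hv : v ≠ c) (h : legLeaf G c u ≠ legLeaf G c v) : G.Between u c v := by
  obtain ⟨a, hac, huac⟩ := hT.connected.exists_adj_between hu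
  obtain ⟨b, hbc, hvbc⟩ := hT.connected.exists_adj_between hv
  have hab : b ≠ a := by
    rintro rfl
    exact h ((hT.legLeaf_eq_legLeaf huniq hac.ne hu huac.symm).symm.trans
      (hT.legLeaf_eq_legLeaf huniq hac.ne hv hvbc.symm))
  have hucb := hT.between_of_between_of_between huac
    (hT.between_of_adj_of_ne hac hbc.symm hab (between_self_left a c)) hac.ne
  exact (hT.between_of_between_of_between hucb hvbc.symm hbc.ne.symm).trans_left hT.connected hucb

theorem between_of_legLeaf_eq (hT : G.IsTree) (hu : u ≠ c) (hv : v ≠ c)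
    (h : legLeaf G c u = legLeaf G c v) (hle : G.dist c u ≤ G.dist c v) : G.Between c u v :=
  hT.between_of_between_of_dist_le (hT.legLeaf_spec hu).2 (h ▸ (hT.legLeaf_spec hv).2) hle

theorem eq_of_legLeaf_eq (hT : G.IsTree) (hu : u ≠ c) (hv : v ≠ c)
    (h : legLeaf G c u = legLeaf G c v) (hd : G.dist c u = G.dist c v) : u = v :=
  hT.eq_of_between_of_dist_eq (hT.legLeaf_spec hu).2 (h ▸ (hT.legLeaf_spec hv).2) hd

theorem exists_legLeaf_eq (hT : G.IsTree) (huniq : ∀ v, IsMajor G v → v = c) (hl : IsLeaf G l)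
    {j : ℕ} (hj : 1 ≤ j) (hjl : j ≤ G.dist c l) :
    ∃ z, z ≠ c ∧ legLeaf G c z = l ∧ G.dist c z = j := by
  obtain ⟨z, hz, rfl⟩ := hT.connected.exists_between_dist_eq hjl
  have hzc : z ≠ c := by
    rintro rfl
    simp at hj
  exact ⟨z, hzc, hT.legLeaf_eq huniq hzc hl hz, rfl⟩

theorem dist_eq_add_of_legLeaf_ne (hT : G.IsTree) (huniq : ∀ v, IsMajor G v → v = c)
    (ht : t ≠ c) (h : w ≠ c → legLeaf G c w ≠ legLeaf G c t) :
    G.dist w t = G.dist c w + G.dist c t := by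
  obtain rfl | hw := eq_or_ne w c
  · simp
  · have := hT.between_of_legLeaf_ne huniq hw ht (h hw)
    rw [Between, dist_comm (u := w)] at this
    exact this.symm

theorem dist_add_one_le_distSet (hT : G.IsTree) (huniq : ∀ v, IsMajor G v → v = c)
    {P : Set V} (hP : P.Nonempty)
    (h : ∀ t ∈ P, t ≠ c ∧ (w ≠ c → legLeaf G c w ≠ legLeaf G c t)) :
    G.dist c w + 1 ≤ distSet G w P :=
  le_distSet hP fun t ht => by
    rw [hT.dist_eq_add_of_legLeaf_ne huniq (h t ht).1 (h t ht).2]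
    have := hT.connected.pos_dist_of_ne (h t ht).1.symm
    omega

theorem dist_le_distSet (hT : G.IsTree) (huniq : ∀ v, IsMajor G v → v = c) {P : Set V}
    (hP : P.Nonempty) (h : ∀ t ∈ P, t ≠ c → legLeaf G c w ≠ legLeaf G c t) :
    G.dist c w ≤ distSet G w P :=
  le_distSet hP fun t ht => by
    obtain rfl | htc := eq_or_ne t c
    · rw [dist_comm]
    · rw [hT.dist_eq_add_of_legLeaf_ne huniq htc fun _ => h t ht htc]
      omega

theorem range_spiderColouring (hT : G.IsTree) (huniq : ∀ v, IsMajor G v → v = c)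
    (hc : IsMajor G c) (ha : IsLeaf G a) (hb : IsLeaf G b) (has : a ≠ s) (hbs : b ≠ s) :
    Set.range (spiderColouring G c s a b) = {v | IsLeaf G v} \ {s} := by
  ext l
  constructor
  · rintro ⟨v, rfl⟩
    obtain rfl | hv := eq_or_ne v c
    · rw [spiderColouring_self]
      exact ⟨ha, has⟩
    by_cases h : legLeaf G c v = s
    · rcases spiderColouring_eq_or_eq_of_legLeaf_eq hv h (a := a) (b := b) with h' | h' <;>
        rw [h']
      exacts [⟨ha, has⟩, ⟨hb, hbs⟩]
    · rw [spiderColouring_of_legLeaf_ne hv h]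
      exact ⟨(hT.legLeaf_spec hv).1, h⟩
  · rintro ⟨hl, hls : l ≠ s⟩
    have hlc : l ≠ c := fun h => hc.not_isLeaf (h ▸ hl)
    have hll := hT.legLeaf_eq huniq hlc hl (between_self_right c l)
    exact ⟨l, (spiderColouring_of_legLeaf_ne hlc (by rwa [hll])).trans hll⟩

theorem dist_eq_of_spiderColouring_eq (hT : G.IsTree) (huniq : ∀ v, IsMajor G v → v = c)
    (hc : IsMajor G c) (he : IsLeaf G e) (hes : e ≠ s) (hea : e ≠ a) (heb : e ≠ b)
    (huv : ∀ i, distSet G u {x | spiderColouring G c s a b x = i} =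
      distSet G v {x | spiderColouring G c s a b x = i})
    (h : spiderColouring G c s a b u = spiderColouring G c s a b v) :
    G.dist c u = G.dist c v := by
  set κ := spiderColouring G c s a b
  by_cases hue : κ u = e
  · have hw : ∀ w, κ w = e → distSet G w {x | κ x = a} = G.dist c w := fun w hw => by
      have hcκ : c ∈ {x | κ x = a} := spiderColouring_self
      refine le_antisymm ((distSet_le_dist hcκ).trans_eq dist_comm)
        (hT.dist_le_distSet huniq ⟨c, hcκ⟩ fun t ht htc => ?_)
      rw [(legLeaf_eq_of_spiderColouring_eq hea heb hw).2]
      rcases legLeaf_eq_spiderColouring_or_eq htc (s := s) (a := a) (b := b) with h | h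
      · exact fun h' => hea (h'.trans (h.trans ht))
      · exact fun h' => hes (h'.trans h)
    rw [← hw u hue, ← hw v (h ▸ hue), huv]
  · obtain ⟨e₁, he₁c, he₁e, he₁d⟩ := hT.exists_legLeaf_eq huniq he le_rfl
      (hT.connected.pos_dist_of_ne fun h => hc.not_isLeaf (h ▸ he))
    have hκe₁ : e₁ ∈ {x | κ x = e} :=
      (spiderColouring_of_legLeaf_ne he₁c (he₁e ▸ hes)).trans he₁e
    have hw : ∀ w, κ w ≠ e → distSet G w {x | κ x = e} = G.dist c w + 1 := fun w hw => by
      have hwe : w ≠ c → legLeaf G c w ≠ e := fun hwc hwe =>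
        hw ((spiderColouring_of_legLeaf_ne hwc (hwe ▸ hes)).trans hwe)
      have hmem := fun t (ht : t ∈ {x | κ x = e}) => legLeaf_eq_of_spiderColouring_eq hea heb ht
      refine le_antisymm ((distSet_le_dist hκe₁).trans_eq ?_)
        (hT.dist_add_one_le_distSet huniq ⟨e₁, hκe₁⟩ fun t ht =>
          ⟨(hmem t ht).1, fun hwc => (hmem t ht).2 ▸ hwe hwc⟩)
      rw [hT.dist_eq_add_of_legLeaf_ne huniq he₁c fun hwc => he₁e ▸ hwe hwc, he₁d]
    have := huv e
    rw [hw u hue, hw v (h ▸ hue)] at this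
    omega

theorem distSet_lt_of_dist_eq_one (hT : G.IsTree) (huniq : ∀ v, IsMajor G v → v = c)
    (hs : IsLeaf G s) (hsd : 2 ≤ G.dist c s) (has : a ≠ s) (hab : a ≠ b)
    (hua : legLeaf G c u = a) (hu : G.dist c u = 1) (hvs : legLeaf G c v = s)
    (hv : G.dist c v = 1) :
    distSet G v {x | spiderColouring G c s a b x = b} <
      distSet G u {x | spiderColouring G c s a b x = b} := by
  obtain ⟨a₂, ha₂c, ha₂s, ha₂d⟩ := hT.exists_legLeaf_eq huniq hs (by norm_num) hsd
  have hvc : v ≠ c := by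
    rintro rfl
    simp at hv
  have ha₂ : a₂ ∈ {x | spiderColouring G c s a b x = b} := by
    show spiderColouring G c s a b a₂ = b
    rw [spiderColouring_of_legLeaf_eq ha₂c ha₂s, if_neg (by omega)]
  calc distSet G v _ ≤ G.dist v a₂ := distSet_le_dist ha₂
    _ < G.dist c u + 1 := by
      have := hT.between_of_legLeaf_eq hvc ha₂c (hvs.trans ha₂s.symm) (by omega)
      unfold Between at this
      omega
    _ ≤ distSet G u _ := hT.dist_add_one_le_distSet huniq ⟨a₂, ha₂⟩ fun t ht => by
      have htc : t ≠ c := by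
        rintro rfl
        exact hab (spiderColouring_self.symm.trans ht)
      refine ⟨htc, fun _ => ?_⟩
      rw [hua]
      rcases legLeaf_eq_spiderColouring_or_eq htc (s := s) (a := a) (b := b) with h | h
      · exact h.trans ht ▸ hab
      · exact h ▸ has

theorem distSet_lt_of_two_le_dist (hT : G.IsTree) (huniq : ∀ v, IsMajor G v → v = c)
    (hbs : b ≠ s) (hab : a ≠ b) (hub : legLeaf G c u = b) (hvs : legLeaf G c v = s)
    (hv : 2 ≤ G.dist c v) (hd : G.dist c u = G.dist c v) :
    distSet G v {x | spiderColouring G c s a b x = a} <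
      distSet G u {x | spiderColouring G c s a b x = a} := by
  obtain ⟨a₁, hca₁v, ha₁d⟩ :=
    hT.connected.exists_between_dist_eq (a := c) (b := v) (j := 1) (by omega)
  have hvc : v ≠ c := by
    rintro rfl
    simp at hv
  have ha₁c : a₁ ≠ c := by
    rintro rfl
    simp at ha₁d
  have hc : c ∈ {x | spiderColouring G c s a b x = a} := spiderColouring_self
  have ha₁ : a₁ ∈ {x | spiderColouring G c s a b x = a} := by
    show spiderColouring G c s a b a₁ = a
    rw [spiderColouring_of_legLeaf_eq ha₁c
      ((hT.legLeaf_eq_legLeaf huniq ha₁c hvc hca₁v).trans hvs), if_pos ha₁d]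
  calc distSet G v _ ≤ G.dist v a₁ := distSet_le_dist ha₁
    _ < G.dist c u := by
      have := G.dist_comm (u := v) (v := a₁)
      unfold Between at hca₁v
      omega
    _ ≤ distSet G u _ := hT.dist_le_distSet huniq ⟨c, hc⟩ fun t ht htc => by
      rw [hub]
      rcases legLeaf_eq_spiderColouring_or_eq htc (s := s) (a := a) (b := b) with h | h
      · exact h.trans ht ▸ hab.symm
      · exact h ▸ hbs

theorem exists_distSet_ne_of_legLeaf_eq (hT : G.IsTree) (huniq : ∀ v, IsMajor G v → v = c)
    (hs : IsLeaf G s) (hsd : 2 ≤ G.dist c s) (has : a ≠ s) (hbs : b ≠ s) (hab : a ≠ b)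
    (hu : u ≠ c) (hv : v ≠ c) (hus : legLeaf G c u ≠ s) (hvs : legLeaf G c v = s)
    (h : spiderColouring G c s a b u = spiderColouring G c s a b v)
    (hd : G.dist c u = G.dist c v) :
    ∃ i, distSet G u {x | spiderColouring G c s a b x = i} ≠
      distSet G v {x | spiderColouring G c s a b x = i} := by
  have hlu := ((legLeaf_eq_spiderColouring_or_eq hu).resolve_right hus).trans h
  have hκv := spiderColouring_of_legLeaf_eq (a := a) (b := b) hv hvs
  have hv0 := hT.connected.pos_dist_of_ne hv.symm
  split_ifs at hκv with hv1
  · exact ⟨b, (hT.distSet_lt_of_dist_eq_one huniq hs hsd has hab (hlu.trans hκv)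
      (hd.trans hv1) hvs hv1).ne'⟩
  · exact ⟨a, (hT.distSet_lt_of_two_le_dist huniq hbs hab (hlu.trans hκv) hvs (by omega)
      hd).ne'⟩

theorem isResolvingColouring_spiderColouring (hT : G.IsTree)
    (huniq : ∀ v, IsMajor G v → v = c) (hc : IsMajor G c) (hs : IsLeaf G s)
    (hsd : 2 ≤ G.dist c s) (he : IsLeaf G e) (has : a ≠ s) (hbs : b ≠ s) (hab : a ≠ b)
    (hes : e ≠ s) (hea : e ≠ a) (heb : e ≠ b) :
    IsResolvingColouring G (spiderColouring G c s a b) := by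
  intro u v huv
  set κ := spiderColouring G c s a b
  have hκ : κ u = κ v := by
    have hu : u ∈ {x | κ x = κ u} := rfl
    have := huv (κ u)
    rw [(hT.connected.distSet_eq_zero_iff ⟨u, hu⟩).2 hu] at this
    exact ((hT.connected.distSet_eq_zero_iff ⟨u, hu⟩).1 this.symm).symm
  have hd := hT.dist_eq_of_spiderColouring_eq huniq hc he hes hea heb huv hκ
  obtain rfl | hu := eq_or_ne u c
  · exact hT.connected.dist_eq_zero_iff.1 (by rw [← hd, dist_self])
  obtain rfl | hv := eq_or_ne v c
  · exact (hT.connected.dist_eq_zero_iff.1 (by rw [hd, dist_self])).symm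
  by_cases hleg : legLeaf G c u = legLeaf G c v
  · exact hT.eq_of_legLeaf_eq hu hv hleg hd
  exfalso
  by_cases hus : legLeaf G c u = s
  · have hvs : legLeaf G c v ≠ s := fun h => hleg (hus.trans h.symm)
    obtain ⟨i, hi⟩ :=
      hT.exists_distSet_ne_of_legLeaf_eq huniq hs hsd has hbs hab hv hu hvs hus hκ.symm hd.symm
    exact hi (huv i).symm
  · have hvs : legLeaf G c v = s := by
      by_contra hvs
      exact hleg (((legLeaf_eq_spiderColouring_or_eq hu).resolve_right hus).trans
        (hκ.trans ((legLeaf_eq_spiderColouring_or_eq hv).resolve_right hvs).symm))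
    obtain ⟨i, hi⟩ :=
      hT.exists_distSet_ne_of_legLeaf_eq huniq hs hsd has hbs hab hu hv hus hvs hκ hd
    exact hi (huv i)

theorem exists_isResolvingPartition_of_forall_isMajor_eq (hT : G.IsTree)
    (hl : 4 ≤ numLeaves G) (hs : ¬ IsStar G) (hc : IsMajor G c)
    (huniq : ∀ v, IsMajor G v → v = c) :
    ∃ f : V → Fin (numLeaves G - 1), IsResolvingPartition G f := by
  obtain ⟨s, hs, hsd⟩ := hT.exists_isLeaf_one_lt_dist hs c
  have hsub : {s} ⊆ {v | IsLeaf G v} := Set.singleton_subset_iff.2 hs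
  have h3 : 2 < ({v | IsLeaf G v} \ {s}).ncard := by
    rw [Set.ncard_sdiff hsub, Set.ncard_singleton]
    unfold numLeaves at hl
    omega
  obtain ⟨a, b, e, ⟨ha, has⟩, ⟨hb, hbs⟩, ⟨he, hes⟩, hab, hae, hbe⟩ :=
    (Set.two_lt_ncard_iff (Set.toFinite _)).1 h3
  have hcard : (Set.range (spiderColouring G c s a b)).ncard = numLeaves G - 1 := by
    rw [hT.range_spiderColouring huniq hc ha hb has hbs, Set.ncard_sdiff hsub,
      Set.ncard_singleton]
    rfl
  exact hcard ▸ (hT.isResolvingColouring_spiderColouring huniq hc hs hsd he has hbs hab hes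
    hae.symm hbe.symm).exists_isResolvingPartition

end SimpleGraph.IsTree

/-- A tree with at least four leaves which is not a star satisfies `pd(T) < n₁(T)`,
i.e. it admits a resolving partition with fewer than `n₁(T)` classes. -/
theorem partitionDim_lt_numLeaves_of_not_isStar {V : Type*} [Fintype V] (G : SimpleGraph V)
    (hT : G.IsTree) (hl : 4 ≤ numLeaves G) (hs : ¬ IsStar G) :
    partitionDim G < numLeaves G ∧
      ∃ t : ℕ, t < numLeaves G ∧ ∃ c : V → Fin t, IsResolvingPartition G c := by
  obtain ⟨c, hc⟩ := hT.exists_isMajor (by omega)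
  obtain ⟨f, hf⟩ : ∃ f : V → Fin (numLeaves G - 1), IsResolvingPartition G f := by
    by_cases huniq : ∀ v, IsMajor G v → v = c
    · exact hT.exists_isResolvingPartition_of_forall_isMajor_eq hl hs hc huniq
    · push Not at huniq
      obtain ⟨w, hw, hwc⟩ := huniq
      exact hT.exists_isResolvingPartition_of_isMajor_ne hc hw hwc.symm
  have hle : partitionDim G ≤ numLeaves G - 1 := Nat.sInf_le ⟨f, hf⟩
  exact ⟨by omega, _, by omega, f, hf⟩
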